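/- arXiv:1006.0890 — 3 statements merged into one kernel-verified Lean document; each statement's English description precedes it below -/
import Mathlib

section
/- With J̃(φ) = F(μ,η,ϑ) + ν R(φ) as above (μ ≥ η > 0, ν > 0), the minimum over φ of tr(J̃(φ)⁻¹) equals (μ + η + ν)/(μ(η + ν)), achieved when φ = ϑ ± π/2, and the maximum equals (μ + η + ν)/(η(μ + ν)), achieved when φ = ϑ (mod π). -/
open Matrix Real

noncomputable def rotM (ϑ : ℝ) : Matrix (Fin 2) (Fin 2) ℝ :=
  !![cos ϑ, -sin ϑ; sin ϑ, cos ϑ]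

noncomputable def RDM (φ : ℝ) : Matrix (Fin 2) (Fin 2) ℝ :=
  vecMulVec ![cos φ, sin φ] ![cos φ, sin φ]

noncomputable def Fmat (μ η ϑ : ℝ) : Matrix (Fin 2) (Fin 2) ℝ :=
  rotM ϑ * Matrix.diagonal ![μ, η] * (rotM ϑ)ᵀ

lemma diag_eq (μ η : ℝ) : Matrix.diagonal ![μ, η] = !![μ, 0; 0, η] := by
  ext i j; fin_cases i <;> fin_cases j <;> simp [Matrix.diagonal]

lemma Fmat_eq (μ η ϑ : ℝ) : Fmat μ η ϑ =
    !![μ * cos ϑ ^ 2 + η * sin ϑ ^ 2, (μ - η) * cos ϑ * sin ϑ;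
       (μ - η) * cos ϑ * sin ϑ, μ * sin ϑ ^ 2 + η * cos ϑ ^ 2] := by
  rw [Fmat, diag_eq]
  ext i j
  fin_cases i <;> fin_cases j <;>
    simp [rotM, Matrix.mul_apply, Fin.sum_univ_succ, Matrix.transpose_apply,
      Matrix.vecHead, Matrix.vecTail] <;> ring

lemma RDM_eq (φ : ℝ) : RDM φ =
    !![cos φ ^ 2, cos φ * sin φ; cos φ * sin φ, sin φ ^ 2] := by
  ext i j
  fin_cases i <;> fin_cases j <;> simp [RDM, vecMulVec_apply] <;> ring

lemma Jtrace (μ η ϑ ν φ : ℝ) : (Fmat μ η ϑ + ν • RDM φ).trace = μ + η + ν := by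
  simp [Fmat_eq, RDM_eq, Matrix.trace_fin_two]
  linear_combination (μ + η) * sin_sq_add_cos_sq ϑ + ν * sin_sq_add_cos_sq φ

lemma Jdet (μ η ϑ ν φ : ℝ) : (Fmat μ η ϑ + ν • RDM φ).det
    = μ * η + ν * (η + (μ - η) * sin (φ - ϑ) ^ 2) := by
  simp [Fmat_eq, RDM_eq, Matrix.det_fin_two, sin_sub]
  linear_combination (η * (μ * sin ϑ ^ 2 + η * cos ϑ ^ 2 + ν * sin φ ^ 2 + η
      + (μ - η) * cos ϑ ^ 2 + ν * cos φ ^ 2 + (μ - η))) * sin_sq_add_cos_sq ϑ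
    + η * ν * sin_sq_add_cos_sq φ

lemma trace_inv_fin_two (A : Matrix (Fin 2) (Fin 2) ℝ) :
    A⁻¹.trace = A.trace / A.det := by
  rw [Matrix.inv_def, Matrix.trace_smul, Matrix.adjugate_fin_two,
    Matrix.trace_fin_two, Matrix.trace_fin_two]
  simp [Ring.inverse_eq_inv', div_eq_mul_inv, mul_comm]
  exact Or.inl (add_comm _ _)

lemma Jtrace_inv (μ η ϑ ν φ : ℝ) : ((Fmat μ η ϑ + ν • RDM φ)⁻¹).trace
    = (μ + η + ν) / (μ * η + ν * (η + (μ - η) * sin (φ - ϑ) ^ 2)) := by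
  rw [trace_inv_fin_two, Jtrace, Jdet]

theorem speb_min_max_over_angle (μ η ϑ ν : ℝ) (hμη : μ ≥ η) (hη : 0 < η) (hν : 0 < ν) :
    (∀ φ : ℝ, (μ + η + ν) / (μ * (η + ν)) ≤ ((Fmat μ η ϑ + ν • RDM φ)⁻¹).trace) ∧
    ((Fmat μ η ϑ + ν • RDM (ϑ + π / 2))⁻¹).trace = (μ + η + ν) / (μ * (η + ν)) ∧
    ((Fmat μ η ϑ + ν • RDM (ϑ - π / 2))⁻¹).trace = (μ + η + ν) / (μ * (η + ν)) ∧
    (∀ φ : ℝ, ((Fmat μ η ϑ + ν • RDM φ)⁻¹).trace ≤ (μ + η + ν) / (η * (μ + ν))) ∧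
    (∀ k : ℤ, ((Fmat μ η ϑ + ν • RDM (ϑ + k * π))⁻¹).trace
        = (μ + η + ν) / (η * (μ + ν))) := by
  have hμ : 0 < μ := lt_of_lt_of_le hη hμη
  have hnum : 0 ≤ μ + η + ν := by linarith
  have hDpos : ∀ φ : ℝ, 0 < μ * η + ν * (η + (μ - η) * sin (φ - ϑ) ^ 2) := by
    intro φ
    nlinarith [mul_pos hμ hη, mul_pos hν hη,
      mul_nonneg (mul_nonneg hν.le (sub_nonneg.2 hμη)) (sq_nonneg (sin (φ - ϑ)))]
  refine ⟨?_, ?_, ?_, ?_, ?_⟩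
  · intro φ
    rw [Jtrace_inv]
    have hs := sin_sq_le_one (φ - ϑ)
    have hle : μ * η + ν * (η + (μ - η) * sin (φ - ϑ) ^ 2) ≤ μ * (η + ν) := by
      nlinarith [mul_nonneg (mul_nonneg hν.le (sub_nonneg.2 hμη)) (sub_nonneg.2 hs)]
    exact div_le_div_of_nonneg_left hnum (hDpos φ) hle
  · rw [Jtrace_inv]
    have : ϑ + π / 2 - ϑ = π / 2 := by ring
    rw [this, sin_pi_div_two]
    ring_nf
  · rw [Jtrace_inv]
    have : ϑ - π / 2 - ϑ = -(π / 2) := by ring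
    rw [this, sin_neg, sin_pi_div_two]
    ring_nf
  · intro φ
    rw [Jtrace_inv]
    have hle : η * (μ + ν) ≤ μ * η + ν * (η + (μ - η) * sin (φ - ϑ) ^ 2) := by
      nlinarith [mul_nonneg (mul_nonneg hν.le (sub_nonneg.2 hμη)) (sq_nonneg (sin (φ - ϑ)))]
    have hb : 0 < η * (μ + ν) := by positivity
    exact div_le_div_of_nonneg_left hnum hb hle
  · intro k
    rw [Jtrace_inv]
    have : ϑ + (k : ℝ) * π - ϑ = (k : ℝ) * π := by ring
    rw [this, Real.sin_int_mul_pi]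
    ring_nf
end

section
/- For N angles φ₁,…,φ_N such that J = Σ_{j=1}^N R(φⱼ) is invertible, tr(J⁻¹) = 2N / (Σ_{k=1}^N Σ_{j=1}^N sin²(φ_k − φ_j)). -/
open Matrix Real

theorem speb_equal_rii_trace_formula (N : ℕ) (φ : Fin N → ℝ)
    (hinv : IsUnit (∑ j, RDM (φ j)).det) :
    ((∑ j, RDM (φ j))⁻¹).trace
      = 2 * N / (∑ k, ∑ j, sin (φ k - φ j) ^ 2) := by
  set J := ∑ j, RDM (φ j) with hJ
  have hd0 : J.det ≠ 0 := by
    intro h; rw [h] at hinv; exact (by simpa using hinv : IsUnit (0:ℝ)).ne_zero rfl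
  have hJe : ∀ i j, J i j = ∑ l, (![cos (φ l), sin (φ l)] i) * (![cos (φ l), sin (φ l)] j) := by
    intro i j
    fin_cases i <;> fin_cases j <;>
      simp [hJ, RDM, Matrix.sum_apply, vecMulVec_apply]
  set A := ∑ l, cos (φ l) * cos (φ l) with hA
  set B := ∑ l, sin (φ l) * sin (φ l) with hB
  set C := ∑ l, cos (φ l) * sin (φ l) with hC
  have hCs : (∑ l, sin (φ l) * cos (φ l)) = C := by
    rw [hC]; exact Finset.sum_congr rfl fun l _ => mul_comm _ _
  have hdet : J.det = A * B - C * C := by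
    rw [Matrix.det_fin_two, hJe, hJe, hJe, hJe]
    simp only [Matrix.cons_val_zero, Matrix.cons_val_one, Matrix.head_cons]
    rw [hCs, ← hA, ← hB, ← hC]
  have inner : ∀ k, (∑ j, sin (φ k - φ j) ^ 2)
      = sin (φ k) * sin (φ k) * A - 2 * (cos (φ k) * sin (φ k)) * C
        + cos (φ k) * cos (φ k) * B := by
    intro k
    have e : ∀ j, sin (φ k - φ j) ^ 2
        = sin (φ k) * sin (φ k) * (cos (φ j) * cos (φ j))
          - 2 * (cos (φ k) * sin (φ k)) * (cos (φ j) * sin (φ j))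
          + cos (φ k) * cos (φ k) * (sin (φ j) * sin (φ j)) := by
      intro j; rw [sin_sub]; ring
    rw [Finset.sum_congr rfl fun j _ => e j]
    rw [Finset.sum_add_distrib, Finset.sum_sub_distrib, ← Finset.mul_sum, ← Finset.mul_sum,
      ← Finset.mul_sum, ← hA, ← hB, ← hC]
  have hsum : (∑ k, ∑ j, sin (φ k - φ j) ^ 2) = 2 * J.det := by
    rw [Finset.sum_congr rfl fun k _ => inner k]
    rw [Finset.sum_add_distrib, Finset.sum_sub_distrib, ← Finset.sum_mul, ← Finset.sum_mul,
      ← Finset.sum_mul, ← Finset.mul_sum, ← hA, ← hB, ← hC, hdet]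
    ring
  have htr : J.trace = N := by
    rw [hJ, Matrix.trace_sum]
    have : ∀ j : Fin N, (RDM (φ j)).trace = 1 := by
      intro j
      rw [Matrix.trace_fin_two]
      simp [RDM, vecMulVec_apply]
      have := sin_sq_add_cos_sq (φ j)
      nlinarith [this]
    rw [Finset.sum_congr rfl fun j _ => this j, Finset.sum_const, Finset.card_univ,
      Fintype.card_fin, nsmul_eq_mul, mul_one]
  have hadj : J.adjugate.trace = J.trace := by
    rw [Matrix.adjugate_fin_two, Matrix.trace_fin_two, Matrix.trace_fin_two]
    simp [add_comm]
  have hinvtr : (J⁻¹).trace = J.det⁻¹ * N := by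
    rw [Matrix.inv_def, Matrix.trace_smul, hadj, htr, Ring.inverse_eq_inv', smul_eq_mul]
  rw [hinvtr, hsum]
  field_simp
end

section
/- Let φ₁,…,φ_N be i.i.d. uniform on [0, 2π). Then the probability that Σ_{k=1}^N Σ_{j=1}^N sin²(φ_k − φ_j) < N²/32 tends to 0 as N → ∞. -/
/-!
Since `sin² (a - b) = (1 - cos (2a - 2b)) / 2`, the double sum equals `(N² - |Z_N|²) / 2` with
`Z_N = ∑ₖ exp (2iφₖ)`. The summands of `Z_N` are independent, centred and of modulus one, so
`𝔼 |Z_N|² = N`, and by Markov's inequality `|Z_N|² ≥ (1 - 2c) N²` has probability at most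
`1 / ((1 - 2c) N)`, and this event contains the one where the double sum is below `c N²`.
-/

open MeasureTheory ProbabilityTheory Filter Topology Real
open scoped ENNReal Finset

noncomputable def uniformAngle : Measure ℝ :=
  (ENNReal.ofReal (2 * π))⁻¹ • volume.restrict (Set.Ico 0 (2 * π))

theorem sin_sub_sq_eq (a b : ℝ) :
    sin (a - b) ^ 2 = (1 - (cos (2 * a) * cos (2 * b) + sin (2 * a) * sin (2 * b))) / 2 := by
  rw [sin_sq_eq_half_sub, ← cos_sub, ← mul_sub]
  ring

theorem sum_sum_sin_sub_sq {ι : Type*} (s : Finset ι) (θ : ι → ℝ) :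
    ∑ k ∈ s, ∑ j ∈ s, sin (θ k - θ j) ^ 2
      = (#s ^ 2 - ((∑ k ∈ s, cos (2 * θ k)) ^ 2 + (∑ k ∈ s, sin (2 * θ k)) ^ 2)) / 2 := by
  simp_rw [sin_sub_sq_eq, sq, Finset.sum_mul_sum, ← Finset.sum_add_distrib, ← Finset.sum_div,
    Finset.sum_sub_distrib, Finset.sum_const, nsmul_eq_mul, mul_one]

section
variable {Ω : Type*} [MeasurableSpace Ω] {μ : Measure Ω}

theorem memLp_cos_comp [IsFiniteMeasure μ] {f : Ω → ℝ} (hf : AEStronglyMeasurable f μ)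
    (p : ℝ≥0∞) : MemLp (fun ω => cos (f ω)) p μ :=
  .of_bound (by fun_prop) 1 (.of_forall fun ω => by simpa using abs_cos_le_one _)

theorem memLp_sin_comp [IsFiniteMeasure μ] {f : Ω → ℝ} (hf : AEStronglyMeasurable f μ)
    (p : ℝ≥0∞) : MemLp (fun ω => sin (f ω)) p μ :=
  .of_bound (by fun_prop) 1 (.of_forall fun ω => by simpa using abs_sin_le_one _)

theorem integral_sq_sum_of_pairwise_indepFun [IsFiniteMeasure μ] {ι : Type*}
    {X : ι → Ω → ℝ} {s : Finset ι} (hX : ∀ i ∈ s, MemLp (X i) 2 μ)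
    (hindep : Set.Pairwise ↑s fun i j => X i ⟂ᵢ[μ] X j) (hmean : ∀ i ∈ s, μ[X i] = 0) :
    ∫ ω, (∑ i ∈ s, X i ω) ^ 2 ∂μ = ∑ i ∈ s, ∫ ω, X i ω ^ 2 ∂μ := by
  have hsum_mean : μ[∑ i ∈ s, X i] = 0 := by
    simp_rw [Finset.sum_apply]
    rw [integral_finsetSum s fun i hi => (hX i hi).integrable one_le_two]
    exact Finset.sum_eq_zero hmean
  have hvar := IndepFun.variance_sum hX hindep
  rw [variance_of_integral_eq_zero (memLp_finsetSum' s hX).aemeasurable hsum_mean,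
    Finset.sum_congr rfl fun i hi =>
      variance_of_integral_eq_zero (hX i hi).aemeasurable (hmean i hi)] at hvar
  simpa only [Finset.sum_apply] using hvar

theorem integral_comp_of_map_eq_uniformAngle {φ : Ω → ℝ} (hφ : AEMeasurable φ μ)
    (hunif : μ.map φ = uniformAngle) {g : ℝ → ℝ} (hg : Continuous g) :
    ∫ ω, g (φ ω) ∂μ = (2 * π)⁻¹ * ∫ x in 0..2 * π, g x := by
  rw [← integral_map hφ hg.aestronglyMeasurable, hunif, uniformAngle, integral_smul_measure,
    intervalIntegral.integral_of_le two_pi_pos.le, integral_Ico_eq_integral_Ioo,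
    integral_Ioc_eq_integral_Ioo, ENNReal.toReal_inv, ENNReal.toReal_ofReal two_pi_pos.le,
    smul_eq_mul]

theorem integral_cos_int_mul_of_map_eq_uniformAngle {φ : Ω → ℝ} (hφ : AEMeasurable φ μ)
    (hunif : μ.map φ = uniformAngle) {n : ℤ} (hn : n ≠ 0) :
    ∫ ω, cos (n * φ ω) ∂μ = 0 := by
  rw [integral_comp_of_map_eq_uniformAngle hφ hunif (g := fun x => cos (n * x))
      (by fun_prop),
    intervalIntegral.integral_comp_mul_left cos (Int.cast_ne_zero.2 hn), integral_cos]
  have h : (n : ℝ) * (2 * π) = ((2 * n : ℤ) : ℝ) * π := by push_cast; ring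
  rw [h, sin_int_mul_pi]
  simp

theorem integral_sin_int_mul_of_map_eq_uniformAngle {φ : Ω → ℝ} (hφ : AEMeasurable φ μ)
    (hunif : μ.map φ = uniformAngle) (n : ℤ) :
    ∫ ω, sin (n * φ ω) ∂μ = 0 := by
  rcases eq_or_ne n 0 with rfl | hn
  · simp
  rw [integral_comp_of_map_eq_uniformAngle hφ hunif (g := fun x => sin (n * x))
      (by fun_prop),
    intervalIntegral.integral_comp_mul_left sin (Int.cast_ne_zero.2 hn), integral_sin]
  simp [cos_int_mul_two_pi]

section
variable [IsProbabilityMeasure μ] {ι : Type*} {φ : ι → Ω → ℝ}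

theorem integral_sq_sum_cos_add_sq_sum_sin (hmeas : ∀ i, Measurable (φ i))
    (hindep : iIndepFun φ μ) (hunif : ∀ i, μ.map (φ i) = uniformAngle) (s : Finset ι) :
    ∫ ω, ((∑ k ∈ s, cos (2 * φ k ω)) ^ 2 + (∑ k ∈ s, sin (2 * φ k ω)) ^ 2) ∂μ
      = #s := by
  have hcos : ∀ i ∈ s, MemLp (fun ω => cos (2 * φ i ω)) 2 μ := fun i _ =>
    memLp_cos_comp (by fun_prop) 2
  have hsin : ∀ i ∈ s, MemLp (fun ω => sin (2 * φ i ω)) 2 μ := fun i _ =>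
    memLp_sin_comp (by fun_prop) 2
  have hcos_mean : ∀ i ∈ s, ∫ ω, cos (2 * φ i ω) ∂μ = 0 := fun i _ => by
    exact_mod_cast integral_cos_int_mul_of_map_eq_uniformAngle (hmeas i).aemeasurable (hunif i)
      two_ne_zero
  have hsin_mean : ∀ i ∈ s, ∫ ω, sin (2 * φ i ω) ∂μ = 0 := fun i _ => by
    exact_mod_cast
      integral_sin_int_mul_of_map_eq_uniformAngle (hmeas i).aemeasurable (hunif i) 2
  have hpair : ∀ g : ℝ → ℝ, Measurable g →
      Set.Pairwise ↑s fun i j => (fun ω => g (φ i ω)) ⟂ᵢ[μ] (fun ω => g (φ j ω)) :=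
    fun g hg i _ j _ hij => (hindep.indepFun hij).comp hg hg
  have hterm : ∀ i ∈ s, ∫ ω, cos (2 * φ i ω) ^ 2 ∂μ + ∫ ω, sin (2 * φ i ω) ^ 2 ∂μ = 1 :=
    fun i hi => by
      rw [← integral_add (hcos i hi).integrable_sq (hsin i hi).integrable_sq]
      simp [cos_sq_add_sin_sq]
  rw [integral_add (memLp_finsetSum s hcos).integrable_sq
      (memLp_finsetSum s hsin).integrable_sq,
    integral_sq_sum_of_pairwise_indepFun hcos
      (hpair (fun x => cos (2 * x)) (by fun_prop)) hcos_mean,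
    integral_sq_sum_of_pairwise_indepFun hsin
      (hpair (fun x => sin (2 * x)) (by fun_prop)) hsin_mean,
    ← Finset.sum_add_distrib, Finset.sum_congr rfl hterm]
  simp

theorem measure_sum_sum_sin_sub_sq_lt_le (hmeas : ∀ i, Measurable (φ i))
    (hindep : iIndepFun φ μ) (hunif : ∀ i, μ.map (φ i) = uniformAngle)
    {s : Finset ι} (hs : s.Nonempty) {c : ℝ} (hc : c < 1 / 2) :
    μ {ω | ∑ k ∈ s, ∑ j ∈ s, sin (φ k ω - φ j ω) ^ 2 < #s ^ 2 * c}
      ≤ ENNReal.ofReal ((1 - 2 * c)⁻¹ / #s) := by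
  set R := fun ω => (∑ k ∈ s, cos (2 * φ k ω)) ^ 2 + (∑ k ∈ s, sin (2 * φ k ω)) ^ 2
  set ε : ℝ := #s ^ 2 * (1 - 2 * c)
  have hn : (0 : ℝ) < #s := by exact_mod_cast hs.card_pos
  have hsub : {ω | ∑ k ∈ s, ∑ j ∈ s, sin (φ k ω - φ j ω) ^ 2 < #s ^ 2 * c}
      ⊆ {ω | ε ≤ R ω} := fun ω hω => by
    simp only [Set.mem_ofPred_eq, sum_sum_sin_sub_sq] at hω ⊢
    linarith
  have hR : Integrable R μ :=
    (memLp_finsetSum s fun i _ => memLp_cos_comp (by fun_prop) 2).integrable_sq.add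
      (memLp_finsetSum s fun i _ => memLp_sin_comp (by fun_prop) 2).integrable_sq
  have hmarkov : ε * μ.real {ω | ε ≤ R ω} ≤ #s := by
    rw [← integral_sq_sum_cos_add_sq_sum_sin hmeas hindep hunif]
    exact mul_meas_ge_le_integral_of_nonneg (.of_forall fun ω => by positivity) hR ε
  calc μ _ ≤ μ {ω | ε ≤ R ω} := measure_mono hsub
    _ = ENNReal.ofReal (μ.real {ω | ε ≤ R ω}) := (ofReal_measureReal).symm
    _ ≤ ENNReal.ofReal ((1 - 2 * c)⁻¹ / #s) := by
      gcongr
      rw [le_div_iff₀ hn, inv_eq_one_div, le_div_iff₀' (by linarith)]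
      exact le_of_mul_le_mul_left (by linear_combination hmarkov) hn

end

theorem tendsto_measure_sum_sum_sin_sub_sq_lt [IsProbabilityMeasure μ] {φ : ℕ → Ω → ℝ}
    (hmeas : ∀ i, Measurable (φ i)) (hindep : iIndepFun φ μ)
    (hunif : ∀ i, μ.map (φ i) = uniformAngle) {c : ℝ} (hc : c < 1 / 2) :
    Tendsto (fun N : ℕ => μ {ω | ∑ k ∈ Finset.range N, ∑ j ∈ Finset.range N,
        sin (φ k ω - φ j ω) ^ 2 < (N : ℝ) ^ 2 * c}) atTop (𝓝 0) := by
  have hbound : Tendsto (fun N : ℕ => ENNReal.ofReal ((1 - 2 * c)⁻¹ / N)) atTop (𝓝 0) := by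
    simpa using ENNReal.tendsto_ofReal (tendsto_const_div_atTop_nhds_zero_nat (1 - 2 * c)⁻¹)
  refine tendsto_of_tendsto_of_tendsto_of_le_of_le' tendsto_const_nhds hbound
    (.of_forall fun N => zero_le) ?_
  filter_upwards [eventually_ge_atTop 1] with N hN
  simpa using measure_sum_sum_sin_sub_sq_lt_le hmeas hindep hunif
    (Finset.nonempty_range_iff.2 (by omega)) hc

end

theorem uniform_angles_sin_sq_sum_lower_bound
    (Ω : Type*) [MeasureSpace Ω] [IsProbabilityMeasure (ℙ : Measure Ω)]
    (φ : ℕ → Ω → ℝ) (hmeas : ∀ i, Measurable (φ i))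
    (hindep : iIndepFun φ ℙ)
    (hunif : ∀ i, Measure.map (φ i) ℙ
      = (ENNReal.ofReal (2 * Real.pi))⁻¹ • (volume.restrict (Set.Ico 0 (2 * Real.pi)))) :
    Tendsto (fun N : ℕ =>
        ℙ {ω | ∑ k ∈ Finset.range N, ∑ j ∈ Finset.range N,
            Real.sin (φ k ω - φ j ω) ^ 2 < (N : ℝ) ^ 2 / 32})
      atTop (𝓝 0) := by
  simpa only [div_eq_mul_inv] using
    tendsto_measure_sum_sum_sin_sub_sq_lt hmeas hindep hunif (c := 32⁻¹) (by norm_num)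
end
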